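/- Let n ≥ 1 and δ > 1. For any nonnegative locally integrable function w on ℝⁿ with Mw(x) < ∞ for almost every x, the function (Mw)^{1/δ} belongs to A₁, with A₁ constant bounded by a constant depending only on n and δ (independent of w). -/

import Mathlib

open MeasureTheory Metric NNReal ENNReal

/-- The average `⨍_B w` of `w` over the ball `B(x,r)`. -/
noncomputable def ballAvg {n : ℕ} (w : EuclideanSpace ℝ (Fin n) → ℝ≥0∞)
    (x : EuclideanSpace ℝ (Fin n)) (r : ℝ) : ℝ≥0∞ :=
  (volume (ball x r))⁻¹ * ∫⁻ y in ball x r, w y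

/-- The Hardy–Littlewood maximal function: `Mw(x) = sup_{B ∋ x} ⨍_B w`. -/
noncomputable def hlMax {n : ℕ} (w : EuclideanSpace ℝ (Fin n) → ℝ≥0∞)
    (x : EuclideanSpace ℝ (Fin n)) : ℝ≥0∞ :=
  ⨆ (c : EuclideanSpace ℝ (Fin n)) (r : ℝ) (_ : 0 < r) (_ : x ∈ ball c r),
    ballAvg w c r

/-!
Fix a ball `B ∋ x` and split `w = w₁ + w₂` with `w₁ = 𝟙_{3B} w`. A ball meeting `B` on which `w₂`
is not identically zero has radius larger than that of `B`, so it lies in the ball about `x` of four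
times its radius; hence `M w₂ ≤ 4ⁿ Mw(x)` on `B`. The maximal operator is of weak type (1,1) with
constant `4ⁿ` by the Vitali covering lemma, and for `0 < ε < 1` Kolmogorov's inequality (a dyadic
layer-cake estimate) turns this into `⨍_B (M w₁)^ε ≤ K_ε (4ⁿ ‖w₁‖₁ / |B|)^ε ≤ K_ε (12ⁿ Mw(x))^ε`.
Since `t ↦ t^ε` is subadditive, the two bounds add up.
-/

theorem ENNReal.exists_two_pow_mul_lt_le {a b : ℝ≥0∞} (ha0 : a ≠ 0) (hab : a < b) (hb : b ≠ ⊤) :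
    ∃ k : ℕ, 2 ^ k * a < b ∧ b ≤ 2 ^ (k + 1) * a := by
  have hex : ∃ k : ℕ, b ≤ 2 ^ (k + 1) * a := by
    obtain ⟨m, hm⟩ := ENNReal.exists_nat_gt (ENNReal.div_lt_top hb ha0).ne
    refine ⟨m, (ENNReal.div_le_iff_le_mul (.inl ha0) (.inl hab.ne_top)).1 (hm.le.trans ?_)⟩
    exact_mod_cast (m.lt_two_pow_self.trans (Nat.pow_lt_pow_succ Nat.one_lt_two)).le
  refine ⟨Nat.find hex, ?_, Nat.find_spec hex⟩
  rcases Nat.eq_zero_or_eq_succ_pred (Nat.find hex) with h | h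
  · simpa [h] using hab
  · rw [h]
    exact not_le.1 (Nat.find_min hex (h ▸ Nat.lt_succ_self _))

theorem ENNReal.rpow_le_add_tsum_ite {ε : ℝ} (hε : 0 < ε) {a : ℝ≥0∞} (ha0 : a ≠ 0) (b : ℝ≥0∞) :
    b ^ ε ≤ a ^ ε + ∑' k : ℕ, if 2 ^ k * a < b then (2 ^ (k + 1) * a) ^ ε else 0 := by
  rcases le_or_gt b a with hba | hab
  · exact le_add_right (rpow_le_rpow hba hε.le)
  rcases eq_or_ne b ⊤ with rfl | hb
  · have hterm : ∀ k : ℕ, a ^ ε ≤ if 2 ^ k * a < ⊤ then (2 ^ (k + 1) * a) ^ ε else 0 := fun k => by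
      rw [if_pos (mul_lt_top (pow_lt_top ofNat_lt_top) hab)]
      exact rpow_le_rpow (le_mul_of_one_le_left' (one_le_pow₀ one_le_two)) hε.le
    have ha : a ^ ε ≠ 0 := (rpow_pos (pos_iff_ne_zero.2 ha0) hab.ne_top).ne'
    calc ⊤ ^ ε ≤ ∑' _ : ℕ, a ^ ε := by rw [ENNReal.tsum_const_eq_top_of_ne_zero ha]; exact le_top
      _ ≤ _ := (ENNReal.tsum_le_tsum hterm).trans le_add_self
  obtain ⟨k, hk, hbk⟩ := exists_two_pow_mul_lt_le ha0 hab hb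
  calc b ^ ε ≤ (2 ^ (k + 1) * a) ^ ε := rpow_le_rpow hbk hε.le
    _ = if 2 ^ k * a < b then (2 ^ (k + 1) * a) ^ ε else 0 := (if_pos hk).symm
    _ ≤ _ := (ENNReal.le_tsum k).trans le_add_self

theorem ENNReal.tsum_two_pow_succ_mul_rpow_mul_inv {ε : ℝ} (hε : 0 ≤ ε) {a : ℝ≥0∞} (ha0 : a ≠ 0)
    (hatop : a ≠ ⊤) :
    ∑' k : ℕ, (2 ^ (k + 1) * a) ^ ε * (2 ^ k * a)⁻¹ =
      2 ^ ε * (1 - 2 ^ (ε - 1))⁻¹ * a ^ (ε - 1) := by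
  have hterm : ∀ k : ℕ, (2 ^ (k + 1) * a) ^ ε * (2 ^ k * a)⁻¹ =
      2 ^ ε * a ^ (ε - 1) * (2 ^ (ε - 1)) ^ k := fun k => by
    have hb0 : (2 : ℝ≥0∞) ^ k * a ≠ 0 := mul_ne_zero (pow_ne_zero _ two_ne_zero) ha0
    have hbtop : (2 : ℝ≥0∞) ^ k * a ≠ ⊤ := mul_ne_top (pow_ne_top ofNat_ne_top) hatop
    calc (2 ^ (k + 1) * a) ^ ε * (2 ^ k * a)⁻¹ = 2 ^ ε * ((2 ^ k * a) ^ ε / (2 ^ k * a)) := by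
          rw [pow_succ, mul_right_comm, mul_rpow_of_nonneg _ _ hε, mul_comm (_ ^ ε), mul_assoc,
            div_eq_mul_inv]
      _ = 2 ^ ε * ((2 ^ k) ^ (ε - 1) * a ^ (ε - 1)) := by
          nth_rw 2 [← rpow_one (2 ^ k * a)]
          rw [← rpow_sub _ _ hb0 hbtop, mul_rpow_of_ne_top (pow_ne_top ofNat_ne_top) hatop]
      _ = 2 ^ ε * a ^ (ε - 1) * (2 ^ (ε - 1)) ^ k := by
          rw [← rpow_natCast_mul, mul_comm (k : ℝ), rpow_mul_natCast]
          ring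
  simp_rw [hterm, ENNReal.tsum_mul_left, ENNReal.tsum_geometric]
  ring

section WeakType

variable {α : Type*} [MeasurableSpace α] {μ : Measure α} {f : α → ℝ≥0∞} {A : ℝ≥0∞} {ε : ℝ}

theorem setLIntegral_rpow_le_of_weakType (hf : Measurable f)
    (hA : ∀ t : ℝ≥0∞, t * μ {x | t < f x} ≤ A) (hε0 : 0 < ε) (s : Set α) {a : ℝ≥0∞}
    (ha0 : a ≠ 0) (hatop : a ≠ ⊤) :
    ∫⁻ x in s, f x ^ ε ∂μ ≤ a ^ ε * μ s + 2 ^ ε * (1 - 2 ^ (ε - 1))⁻¹ * a ^ (ε - 1) * A := by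
  set S : ℕ → Set α := fun k => {x | 2 ^ k * a < f x}
  have hS : ∀ k, MeasurableSet (S k) := fun k => measurableSet_lt measurable_const hf
  have hvolS : ∀ k : ℕ, μ (S k) ≤ (2 ^ k * a)⁻¹ * A := fun k => by
    have hb0 : (2 : ℝ≥0∞) ^ k * a ≠ 0 := mul_ne_zero (pow_ne_zero _ two_ne_zero) ha0
    have hbtop : (2 : ℝ≥0∞) ^ k * a ≠ ⊤ := mul_ne_top (pow_ne_top ofNat_ne_top) hatop
    rw [← ENNReal.div_eq_inv_mul, ENNReal.le_div_iff_mul_le (.inl hb0) (.inl hbtop), mul_comm]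
    exact hA _
  calc ∫⁻ x in s, f x ^ ε ∂μ
      ≤ ∫⁻ x in s, a ^ ε + ∑' k, (S k).indicator (fun _ => (2 ^ (k + 1) * a) ^ ε) x ∂μ :=
        lintegral_mono fun x => by
          simpa only [S, Set.indicator_apply, Set.mem_ofPred_eq] using
            ENNReal.rpow_le_add_tsum_ite hε0 ha0 (f x)
    _ = a ^ ε * μ s + ∑' k : ℕ, (2 ^ (k + 1) * a) ^ ε * μ.restrict s (S k) := by
        rw [lintegral_add_left measurable_const, setLIntegral_const,
          lintegral_tsum fun k => (measurable_const.indicator (hS k)).aemeasurable]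
        simp_rw [lintegral_indicator_const (hS _)]
    _ ≤ a ^ ε * μ s + ∑' k : ℕ, (2 ^ (k + 1) * a) ^ ε * ((2 ^ k * a)⁻¹ * A) := by
        gcongr with k
        exact (Measure.restrict_apply_le _ _).trans (hvolS k)
    _ = a ^ ε * μ s + 2 ^ ε * (1 - 2 ^ (ε - 1))⁻¹ * a ^ (ε - 1) * A := by
        simp_rw [← mul_assoc, ENNReal.tsum_mul_right,
          ENNReal.tsum_two_pow_succ_mul_rpow_mul_inv hε0.le ha0 hatop]

theorem measure_setOf_pos_eq_zero_of_weakType (hA : ∀ t : ℝ≥0∞, t * μ {x | t < f x} ≤ 0) :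
    μ {x | 0 < f x} = 0 := by
  have hunion : {x | 0 < f x} = ⋃ k : ℕ, {x | (k : ℝ≥0∞)⁻¹ < f x} := by
    ext x
    simp only [Set.mem_ofPred_eq, Set.mem_iUnion]
    exact ⟨fun h => ENNReal.exists_inv_nat_lt h.ne', fun ⟨_, hk⟩ => pos_of_gt hk⟩
  rw [hunion]
  refine measure_iUnion_null fun k => ?_
  simpa using hA (k : ℝ≥0∞)⁻¹

/-- For `ε ≥ 1` the truncated subtraction makes this `⊤`. -/
noncomputable def kolmogorovConst (ε : ℝ) : ℝ≥0∞ := 1 + 2 ^ ε * (1 - 2 ^ (ε - 1))⁻¹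

theorem kolmogorovConst_ne_top (hε0 : 0 ≤ ε) (hε1 : ε < 1) : kolmogorovConst ε ≠ ⊤ := by
  have h : (2 : ℝ≥0∞) ^ (ε - 1) < 1 := rpow_lt_one_of_one_lt_of_neg one_lt_two (by linarith)
  refine add_ne_top.2 ⟨one_ne_top, mul_ne_top (rpow_ne_top_of_nonneg hε0 ofNat_ne_top) ?_⟩
  exact inv_ne_top.2 (tsub_pos_of_lt h).ne'

theorem setLAverage_rpow_le_of_weakType (hf : Measurable f)
    (hA : ∀ t : ℝ≥0∞, t * μ {x | t < f x} ≤ A) (hε0 : 0 < ε) {s : Set α} (hs0 : μ s ≠ 0)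
    (hstop : μ s ≠ ⊤) :
    (μ s)⁻¹ * ∫⁻ x in s, f x ^ ε ∂μ ≤ kolmogorovConst ε * (A / μ s) ^ ε := by
  rcases eq_or_ne A 0 with rfl | hA0
  · have hf0 : ∀ᵐ x ∂μ.restrict s, f x ^ ε = 0 := by
      refine ae_restrict_of_ae (measure_eq_zero_iff_ae_notMem.1
        (measure_setOf_pos_eq_zero_of_weakType hA) |>.mono fun x hx => ?_)
      simp_all [zero_rpow_of_pos hε0]
    simp [lintegral_congr_ae hf0]
  rcases eq_or_ne A ⊤ with rfl | hAtop
  · simp [top_div_of_ne_top hstop, top_rpow_of_pos hε0, kolmogorovConst]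
  obtain ⟨a, rfl⟩ : ∃ a, A = a * μ s := ⟨A / μ s, (ENNReal.div_mul_cancel hs0 hstop).symm⟩
  rw [ENNReal.mul_div_cancel_right hs0 hstop]
  have ha0 : a ≠ 0 := left_ne_zero_of_mul hA0
  have hatop : a ≠ ⊤ := by rintro rfl; exact hAtop (top_mul hs0)
  have hpow : a ^ (ε - 1) * (a * μ s) = a ^ ε * μ s := by
    nth_rw 2 [← rpow_one a]
    rw [← mul_assoc, ← rpow_add _ _ ha0 hatop, sub_add_cancel]
  calc (μ s)⁻¹ * ∫⁻ x in s, f x ^ ε ∂μ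
      ≤ (μ s)⁻¹ * (a ^ ε * μ s + 2 ^ ε * (1 - 2 ^ (ε - 1))⁻¹ * a ^ (ε - 1) * (a * μ s)) := by
        gcongr
        exact setLIntegral_rpow_le_of_weakType hf hA hε0 s ha0 hatop
    _ = (μ s)⁻¹ * (kolmogorovConst ε * a ^ ε * μ s) := by
        rw [mul_assoc _ (a ^ (ε - 1)), hpow, kolmogorovConst]
        ring
    _ = kolmogorovConst ε * a ^ ε := by
        rw [mul_comm, ENNReal.mul_inv_cancel_right hs0 hstop]

end WeakType

section Euclidean

variable {n : ℕ}

local notation "E" => EuclideanSpace ℝ (Fin n)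

theorem volume_ball_mul (a b : E) {k r : ℝ} (hk : 0 < k) :
    volume (ball a (k * r)) = ENNReal.ofReal k ^ n * volume (ball b r) := by
  rw [Measure.addHaar_ball_mul_of_pos volume a hk, finrank_euclideanSpace_fin,
    Measure.addHaar_ball_center volume b, ENNReal.ofReal_pow hk.le]

theorem volume_closedBall_mul (a b : E) {k r : ℝ} (hk : 0 < k) (hr : 0 < r) :
    volume (closedBall a (k * r)) = ENNReal.ofReal k ^ n * volume (ball b r) := by
  rw [Measure.addHaar_closedBall volume a (by positivity), Measure.addHaar_ball_of_pos volume b hr,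
    finrank_euclideanSpace_fin, mul_pow, ENNReal.ofReal_mul (by positivity), mul_assoc,
    ENNReal.ofReal_pow hk.le]

theorem ballAvg_le_hlMax (w : E → ℝ≥0∞) {x c : E} {r : ℝ} (hr : 0 < r) (hx : x ∈ ball c r) :
    ballAvg w c r ≤ hlMax w x :=
  le_iSup_of_le c <| le_iSup_of_le r <| le_iSup_of_le hr <| le_iSup_of_le hx le_rfl

theorem setLIntegral_ball_le_mul_hlMax (w : E → ℝ≥0∞) {x c : E} {r : ℝ} (hr : 0 < r)
    (hx : x ∈ ball c r) : ∫⁻ y in ball c r, w y ≤ volume (ball c r) * hlMax w x := by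
  rw [← ENNReal.mul_inv_cancel_left (measure_ball_pos volume c hr).ne' measure_ball_lt_top.ne
    (b := ∫⁻ y in ball c r, w y)]
  exact mul_le_mul_right (ballAvg_le_hlMax w hr hx) _

theorem exists_ball_of_lt_hlMax {w : E → ℝ≥0∞} {x : E} {l : ℝ≥0∞} (h : l < hlMax w x) :
    ∃ c r, 0 < r ∧ x ∈ ball c r ∧ l < ballAvg w c r := by
  simp only [hlMax, lt_iSup_iff] at h
  obtain ⟨c, r, hr, hx, h⟩ := h
  exact ⟨c, r, hr, hx, h⟩

theorem isOpen_setOf_lt_hlMax (w : E → ℝ≥0∞) (l : ℝ≥0∞) : IsOpen {x : E | l < hlMax w x} := by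
  refine isOpen_iff_forall_mem_open.2 fun x hx => ?_
  obtain ⟨c, r, hr, hxc, hl⟩ := exists_ball_of_lt_hlMax hx
  exact ⟨ball c r, fun y hy => hl.trans_le (ballAvg_le_hlMax w hr hy), isOpen_ball, hxc⟩

theorem measurable_hlMax (w : E → ℝ≥0∞) : Measurable (hlMax w) :=
  measurable_of_Ioi fun l => (isOpen_setOf_lt_hlMax w l).measurableSet

theorem hlMax_le_hlMax_indicator_add_hlMax_indicator_compl (w : E → ℝ≥0∞) {s : Set E}
    (hs : MeasurableSet s) (x : E) :
    hlMax w x ≤ hlMax (s.indicator w) x + hlMax (sᶜ.indicator w) x := by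
  refine iSup_le fun c => iSup_le fun r => iSup_le fun hr => iSup_le fun hx => ?_
  have hsplit : ballAvg w c r = ballAvg (s.indicator w) c r + ballAvg (sᶜ.indicator w) c r := by
    rw [ballAvg, ballAvg, ballAvg, ← mul_add, lintegral_indicator hs, lintegral_indicator hs.compl,
      lintegral_add_compl w hs]
  rw [hsplit]
  exact add_le_add (ballAvg_le_hlMax _ hr hx) (ballAvg_le_hlMax _ hr hx)

theorem exists_countable_pairwiseDisjoint_volume_iUnion_ball_le {ι : Type*} (c : ι → E)
    (r : ι → ℝ) (hr : ∀ i, 0 < r i) {R : ℝ} (hR : ∀ i, r i ≤ R) :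
    ∃ U : Set ι, U.Countable ∧ U.PairwiseDisjoint (fun i => ball (c i) (r i)) ∧
      volume (⋃ i, ball (c i) (r i)) ≤ 4 ^ n * ∑' i : U, volume (ball (c i) (r i)) := by
  obtain ⟨U, -, hUdisj, hUcover⟩ :=
    Vitali.exists_disjoint_subfamily_covering_enlargement_closedBall Set.univ c r R
      (fun i _ => hR i) 4 (by norm_num)
  have hU : U.Countable := hUdisj.countable_of_nonempty_interior fun i _ => by
    rw [interior_closedBall _ (hr i).ne']
    exact nonempty_ball.2 (hr i)
  refine ⟨U, hU, hUdisj.mono fun i => ball_subset_closedBall, ?_⟩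
  have hcover : (⋃ i, ball (c i) (r i)) ⊆ ⋃ i ∈ U, closedBall (c i) (4 * r i) := by
    refine Set.iUnion_subset fun i => ball_subset_closedBall.trans ?_
    obtain ⟨j, hj, hsub⟩ := hUcover i (Set.mem_univ i)
    exact hsub.trans (Set.subset_biUnion_of_mem (u := fun i => closedBall (c i) (4 * r i)) hj)
  calc volume (⋃ i, ball (c i) (r i))
      ≤ ∑' i : U, volume (closedBall (c i) (4 * r i)) :=
        (measure_mono hcover).trans (measure_biUnion_le volume hU _)
    _ = 4 ^ n * ∑' i : U, volume (ball (c i) (r i)) := by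
        rw [← ENNReal.tsum_mul_left]
        refine tsum_congr fun i => ?_
        rw [volume_closedBall_mul _ (c i) four_pos (hr i), ENNReal.ofReal_ofNat]

theorem mul_volume_ball_le_of_le_ballAvg {w : E → ℝ≥0∞} {c : E} {r : ℝ} (hr : 0 < r)
    {l : ℝ≥0∞} (h : l ≤ ballAvg w c r) : l * volume (ball c r) ≤ ∫⁻ y in ball c r, w y := by
  rwa [mul_comm, ENNReal.mul_le_iff_le_inv (measure_ball_pos volume c hr).ne'
    measure_ball_lt_top.ne]

theorem radius_le_of_volume_ball_le (hn : 1 ≤ n) (c : E) {r : ℝ} (hr : 0 < r) {B : ℝ≥0∞}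
    (hB : B ≠ ⊤) (h : volume (ball c r) ≤ B) :
    r ≤ max 1 (B / volume (ball (0 : E) 1)).toReal := by
  have hv0 : volume (ball (0 : E) 1) ≠ 0 := (measure_ball_pos volume _ one_pos).ne'
  have hrn : r ^ n ≤ (B / volume (ball (0 : E) 1)).toReal := by
    rw [← ENNReal.ofReal_le_iff_le_toReal (div_ne_top hB hv0),
      ENNReal.le_div_iff_mul_le (.inl hv0) (.inl measure_ball_lt_top.ne)]
    rwa [Measure.addHaar_ball_of_pos volume c hr, finrank_euclideanSpace_fin] at h
  rcases le_or_gt r 1 with hr1 | hr1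
  · exact le_max_of_le_left hr1
  · exact le_max_of_le_right ((le_self_pow₀ hr1.le (by omega)).trans hrn)

theorem mul_volume_setOf_lt_hlMax_le (hn : 1 ≤ n) (u : E → ℝ≥0∞) (l : ℝ≥0∞) :
    l * volume {x : E | l < hlMax u x} ≤ 4 ^ n * ∫⁻ y, u y := by
  rcases eq_or_ne l 0 with rfl | hl0
  · simp
  rcases eq_or_ne l ⊤ with rfl | hltop
  · simp
  rcases eq_or_ne (∫⁻ y, u y) ⊤ with hI | hI
  · simp [hI]
  choose c r hr hx hl using fun x : {x : E | l < hlMax u x} => exists_ball_of_lt_hlMax x.2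
  have key : ∀ i, l * volume (ball (c i) (r i)) ≤ ∫⁻ y in ball (c i) (r i), u y := fun i =>
    mul_volume_ball_le_of_le_ballAvg (hr i) (hl i).le
  have hR : ∀ i, r i ≤ max 1 ((∫⁻ y, u y) / l / volume (ball (0 : E) 1)).toReal := fun i => by
    refine radius_le_of_volume_ball_le hn (c i) (hr i) (div_ne_top hI hl0) ?_
    rw [ENNReal.le_div_iff_mul_le (.inl hl0) (.inl hltop), mul_comm]
    exact (key i).trans (setLIntegral_le_lintegral _ _)
  obtain ⟨U, hU, hdisj, hvol⟩ :=
    exists_countable_pairwiseDisjoint_volume_iUnion_ball_le c r hr hR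
  calc l * volume {x : E | l < hlMax u x}
      ≤ l * volume (⋃ i, ball (c i) (r i)) :=
        mul_le_mul_right (measure_mono fun x hx' => Set.mem_iUnion.2 ⟨⟨x, hx'⟩, hx _⟩) l
    _ ≤ l * (4 ^ n * ∑' i : U, volume (ball (c i) (r i))) := mul_le_mul_right hvol l
    _ = 4 ^ n * ∑' i : U, l * volume (ball (c i) (r i)) := by
        rw [ENNReal.tsum_mul_left, mul_left_comm]
    _ ≤ 4 ^ n * ∑' i : U, ∫⁻ y in ball (c i) (r i), u y := by
        gcongr with i
        exact key i
    _ = 4 ^ n * ∫⁻ y in ⋃ i ∈ U, ball (c i) (r i), u y := by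
        rw [lintegral_biUnion hU (fun _ _ => measurableSet_ball) hdisj]
    _ ≤ 4 ^ n * ∫⁻ y, u y := mul_le_mul_right (setLIntegral_le_lintegral _ _) _

theorem ball_subset_ball_four_mul {c c' x y : E} {ρ s : ℝ} (hx : x ∈ ball c ρ)
    (hy : y ∈ ball c ρ) (hy' : y ∈ ball c' s) (hsub : ¬ ball c' s ⊆ ball c (3 * ρ)) :
    ball c' s ⊆ ball x (4 * s) := by
  obtain ⟨z, hz, hz3⟩ := Set.not_subset.1 hsub
  rw [mem_ball] at hx hy hy' hz hz3
  have hρs : ρ < s := by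
    have := dist_triangle4 z c' y c
    rw [dist_comm c' y] at this
    linarith [not_lt.1 hz3]
  intro u hu
  rw [mem_ball] at hu ⊢
  have := dist_triangle4 u c' y x
  have := dist_triangle y c x
  rw [dist_comm c' y, dist_comm c x] at *
  linarith

theorem hlMax_indicator_compl_ball_le (w : E → ℝ≥0∞) {c x y : E} {ρ : ℝ} (hx : x ∈ ball c ρ)
    (hy : y ∈ ball c ρ) : hlMax ((ball c (3 * ρ))ᶜ.indicator w) y ≤ 4 ^ n * hlMax w x := by
  refine iSup_le fun c' => iSup_le fun s => iSup_le fun hs => iSup_le fun hy' => ?_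
  by_cases hsub : ball c' s ⊆ ball c (3 * ρ)
  · have hzero : ∫⁻ z in ball c' s, (ball c (3 * ρ))ᶜ.indicator w z = 0 := by
      rw [setLIntegral_congr_fun measurableSet_ball fun z hz =>
        Set.indicator_of_notMem (Set.notMem_compl_iff.2 (hsub hz)) w]
      exact lintegral_zero
    rw [ballAvg, hzero, mul_zero]
    exact zero_le
  have hV0 : volume (ball c' s) ≠ 0 := (measure_ball_pos volume c' hs).ne'
  calc ballAvg ((ball c (3 * ρ))ᶜ.indicator w) c' s
      ≤ (volume (ball c' s))⁻¹ * ∫⁻ z in ball x (4 * s), w z := by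
        refine mul_le_mul_right ((lintegral_mono fun z => Set.indicator_le_self _ w z).trans ?_) _
        exact lintegral_mono_set (ball_subset_ball_four_mul hx hy hy' hsub)
    _ ≤ (volume (ball c' s))⁻¹ * (4 ^ n * volume (ball c' s) * hlMax w x) := by
        rw [← ENNReal.ofReal_ofNat 4, ← volume_ball_mul x c' four_pos]
        exact mul_le_mul_right (setLIntegral_ball_le_mul_hlMax w (by positivity)
          (mem_ball_self (by positivity))) _
    _ = 4 ^ n * hlMax w x := by
        rw [mul_right_comm, mul_comm, ENNReal.mul_inv_cancel_right hV0 measure_ball_lt_top.ne]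

theorem setLAverage_rpow_hlMax_indicator_ball_le (hn : 1 ≤ n) {ε : ℝ} (hε : 0 < ε)
    (w : E → ℝ≥0∞) {c x : E} {ρ : ℝ} (hρ : 0 < ρ) (hx : x ∈ ball c ρ) :
    (volume (ball c ρ))⁻¹ * ∫⁻ y in ball c ρ, hlMax ((ball c (3 * ρ)).indicator w) y ^ ε ≤
      kolmogorovConst ε * (12 ^ n * hlMax w x) ^ ε := by
  have hV0 : volume (ball c ρ) ≠ 0 := (measure_ball_pos volume c hρ).ne'
  have hVtop : volume (ball c ρ) ≠ ⊤ := measure_ball_lt_top.ne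
  refine (setLAverage_rpow_le_of_weakType (measurable_hlMax _)
    (mul_volume_setOf_lt_hlMax_le hn _) hε hV0 hVtop).trans ?_
  gcongr
  calc 4 ^ n * (∫⁻ y, (ball c (3 * ρ)).indicator w y) / volume (ball c ρ)
      = 4 ^ n * (∫⁻ y in ball c (3 * ρ), w y) / volume (ball c ρ) := by
        rw [lintegral_indicator measurableSet_ball]
    _ ≤ 4 ^ n * (volume (ball c (3 * ρ)) * hlMax w x) / volume (ball c ρ) := by
        gcongr
        exact setLIntegral_ball_le_mul_hlMax w (by positivity)
          (ball_subset_ball (by linarith) hx)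
    _ = 12 ^ n * hlMax w x := by
        rw [volume_ball_mul c c three_pos, ENNReal.ofReal_ofNat, mul_right_comm _ _ (hlMax w x),
          ← mul_assoc, ENNReal.mul_div_cancel_right hV0 hVtop, ← mul_assoc, ← mul_pow]
        norm_num

theorem hlMax_rpow_hlMax_le (hn : 1 ≤ n) {ε : ℝ} (hε0 : 0 < ε) (hε1 : ε ≤ 1) (w : E → ℝ≥0∞)
    (x : E) :
    hlMax (fun y => hlMax w y ^ ε) x ≤
      (kolmogorovConst ε * (12 ^ n) ^ ε + (4 ^ n) ^ ε) * hlMax w x ^ ε := by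
  refine iSup_le fun c => iSup_le fun ρ => iSup_le fun hρ => iSup_le fun hx => ?_
  set V := volume (ball c ρ)
  have hsplit : ∀ y, hlMax w y ^ ε ≤
      hlMax ((ball c (3 * ρ)).indicator w) y ^ ε + hlMax ((ball c (3 * ρ))ᶜ.indicator w) y ^ ε :=
    fun y => (rpow_le_rpow (hlMax_le_hlMax_indicator_add_hlMax_indicator_compl w
      measurableSet_ball y) hε0.le).trans (rpow_add_le_add_rpow _ _ hε0.le hε1)
  have hfar : V⁻¹ * ∫⁻ y in ball c ρ, hlMax ((ball c (3 * ρ))ᶜ.indicator w) y ^ ε ≤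
      (4 ^ n * hlMax w x) ^ ε := by
    calc V⁻¹ * ∫⁻ y in ball c ρ, hlMax ((ball c (3 * ρ))ᶜ.indicator w) y ^ ε
        ≤ V⁻¹ * ∫⁻ _ in ball c ρ, (4 ^ n * hlMax w x) ^ ε :=
          mul_le_mul_right (setLIntegral_mono' measurableSet_ball fun y hy =>
            rpow_le_rpow (hlMax_indicator_compl_ball_le w hx hy) hε0.le) _
      _ = (4 ^ n * hlMax w x) ^ ε := by
          rw [setLIntegral_const, mul_comm, ENNReal.mul_inv_cancel_right
            (measure_ball_pos volume c hρ).ne' measure_ball_lt_top.ne]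
  calc ballAvg (fun y => hlMax w y ^ ε) c ρ
      ≤ V⁻¹ * ∫⁻ y in ball c ρ, (hlMax ((ball c (3 * ρ)).indicator w) y ^ ε +
          hlMax ((ball c (3 * ρ))ᶜ.indicator w) y ^ ε) :=
        mul_le_mul_right (lintegral_mono hsplit) _
    _ = (V⁻¹ * ∫⁻ y in ball c ρ, hlMax ((ball c (3 * ρ)).indicator w) y ^ ε) +
          V⁻¹ * ∫⁻ y in ball c ρ, hlMax ((ball c (3 * ρ))ᶜ.indicator w) y ^ ε := by
        rw [lintegral_add_left ((measurable_hlMax _).pow_const ε), mul_add]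
    _ ≤ kolmogorovConst ε * (12 ^ n * hlMax w x) ^ ε + (4 ^ n * hlMax w x) ^ ε :=
        add_le_add (setLAverage_rpow_hlMax_indicator_ball_le hn hε0 w hρ hx) hfar
    _ = (kolmogorovConst ε * (12 ^ n) ^ ε + (4 ^ n) ^ ε) * hlMax w x ^ ε := by
        rw [mul_rpow_of_nonneg _ _ hε0.le, mul_rpow_of_nonneg _ _ hε0.le]
        ring

end Euclidean

/-- Coifman–Rochberg: for `δ > 1` there is a constant `c` (depending only on `n` and `δ`)
such that for every nonnegative locally integrable `w` with `Mw < ∞` a.e., the function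
`(Mw)^{1/δ}` is an `A₁` weight with constant at most `c`:
`M((Mw)^{1/δ}) ≤ c·(Mw)^{1/δ}` a.e. -/
theorem coifman_rochberg (n : ℕ) (hn : 1 ≤ n) (δ : ℝ) (hδ : 1 < δ) :
    ∃ c : ℝ≥0, ∀ w : EuclideanSpace ℝ (Fin n) → ℝ, (∀ x, 0 ≤ w x) →
      LocallyIntegrable w volume →
      (∀ᵐ x : EuclideanSpace ℝ (Fin n), hlMax (fun y => ENNReal.ofReal (w y)) x < ⊤) →
      ∀ᵐ x : EuclideanSpace ℝ (Fin n),
        hlMax (fun y => (hlMax (fun z => ENNReal.ofReal (w z)) y) ^ (1 / δ)) x ≤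
          c * (hlMax (fun y => ENNReal.ofReal (w y)) x) ^ (1 / δ) := by
  have hε0 : 0 < 1 / δ := by positivity
  have hε1 : 1 / δ < 1 := (div_lt_one (by linarith)).2 hδ
  set C := kolmogorovConst (1 / δ) * (12 ^ n) ^ (1 / δ) + (4 ^ n) ^ (1 / δ)
  have hC : C ≠ ⊤ :=
    add_ne_top.2 ⟨mul_ne_top (kolmogorovConst_ne_top hε0.le hε1)
      (rpow_ne_top_of_nonneg hε0.le (pow_ne_top ofNat_ne_top)),
      rpow_ne_top_of_nonneg hε0.le (pow_ne_top ofNat_ne_top)⟩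
  refine ⟨C.toNNReal, fun w _ _ _ => .of_forall fun x => ?_⟩
  rw [coe_toNNReal hC]
  exact hlMax_rpow_hlMax_le hn hε0 hε1.le _ x
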